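/- arXiv:1401.7511 — 2 statements merged into one kernel-verified Lean document; each statement's English description precedes it below -/
import Mathlib

section
/- Let G be a connected simple graph with minimum degree δ ≥ 2. Then δ · R(G) ≤ GA(G), with equality if and only if G is a δ-regular graph. -/
open Finset SimpleGraph

variable {V : Type*} [Fintype V] [DecidableEq V]

/-- The sum-connectivity index `X(G) = Σ_{uv ∈ E(G)} 1/√(d_u + d_v)`. -/
noncomputable def sumConnIndex (G : SimpleGraph V) [DecidableRel G.Adj] : ℝ :=
  ∑ e ∈ G.edgeFinset, Sym2.lift
    ⟨fun u v => 1 / Real.sqrt ((G.degree u : ℝ) + (G.degree v : ℝ)),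
     fun u v => by dsimp only; rw [add_comm ((G.degree u : ℝ)) ((G.degree v : ℝ))]⟩ e

/-- The Randić index `R(G) = Σ_{uv ∈ E(G)} 1/√(d_u d_v)`. -/
noncomputable def randicIndex (G : SimpleGraph V) [DecidableRel G.Adj] : ℝ :=
  ∑ e ∈ G.edgeFinset, Sym2.lift
    ⟨fun u v => 1 / Real.sqrt ((G.degree u : ℝ) * (G.degree v : ℝ)),
     fun u v => by dsimp only; rw [mul_comm ((G.degree u : ℝ)) ((G.degree v : ℝ))]⟩ e

/-- The harmonic index `H(G) = Σ_{uv ∈ E(G)} 2/(d_u + d_v)`. -/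
noncomputable def harmonicIndex (G : SimpleGraph V) [DecidableRel G.Adj] : ℝ :=
  ∑ e ∈ G.edgeFinset, Sym2.lift
    ⟨fun u v => 2 / ((G.degree u : ℝ) + (G.degree v : ℝ)),
     fun u v => by dsimp only; rw [add_comm ((G.degree u : ℝ)) ((G.degree v : ℝ))]⟩ e

/-- The atom-bond connectivity index `ABC(G) = Σ_{uv ∈ E(G)} √((d_u + d_v − 2)/(d_u d_v))`. -/
noncomputable def abcIndex (G : SimpleGraph V) [DecidableRel G.Adj] : ℝ :=
  ∑ e ∈ G.edgeFinset, Sym2.lift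
    ⟨fun u v => Real.sqrt (((G.degree u : ℝ) + (G.degree v : ℝ) - 2) /
        ((G.degree u : ℝ) * (G.degree v : ℝ))),
     fun u v => by dsimp only; rw [add_comm ((G.degree u : ℝ)) ((G.degree v : ℝ)),
        mul_comm ((G.degree u : ℝ)) ((G.degree v : ℝ))]⟩ e

/-- The first geometric-arithmetic index `GA(G) = Σ_{uv ∈ E(G)} 2√(d_u d_v)/(d_u + d_v)`. -/
noncomputable def geoArithIndex (G : SimpleGraph V) [DecidableRel G.Adj] : ℝ :=
  ∑ e ∈ G.edgeFinset, Sym2.lift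
    ⟨fun u v => 2 * Real.sqrt ((G.degree u : ℝ) * (G.degree v : ℝ)) /
        ((G.degree u : ℝ) + (G.degree v : ℝ)),
     fun u v => by dsimp only; rw [mul_comm ((G.degree u : ℝ)) ((G.degree v : ℝ)),
        add_comm ((G.degree u : ℝ)) ((G.degree v : ℝ))]⟩ e

/-- The augmented Zagreb index `AZI(G) = Σ_{uv ∈ E(G)} (d_u d_v/(d_u + d_v − 2))³`. -/
noncomputable def augZagrebIndex (G : SimpleGraph V) [DecidableRel G.Adj] : ℝ :=
  ∑ e ∈ G.edgeFinset, Sym2.lift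
    ⟨fun u v => ((G.degree u : ℝ) * (G.degree v : ℝ) /
        ((G.degree u : ℝ) + (G.degree v : ℝ) - 2)) ^ 3,
     fun u v => by dsimp only; rw [mul_comm ((G.degree u : ℝ)) ((G.degree v : ℝ)),
        add_comm ((G.degree u : ℝ)) ((G.degree v : ℝ))]⟩ e

/-- The modified second Zagreb index `M₂*(G) = Σ_{uv ∈ E(G)} 1/(d_u d_v)`. -/
noncomputable def modSecondZagrebIndex (G : SimpleGraph V) [DecidableRel G.Adj] : ℝ :=
  ∑ e ∈ G.edgeFinset, Sym2.lift
    ⟨fun u v => 1 / ((G.degree u : ℝ) * (G.degree v : ℝ)),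
     fun u v => by dsimp only; rw [mul_comm ((G.degree u : ℝ)) ((G.degree v : ℝ))]⟩ e


lemma key_ineq (a b d : ℝ) (hd : 2 ≤ d) (ha : d ≤ a) (hb : d ≤ b) :
    d * (1 / Real.sqrt (a * b)) ≤ 2 * Real.sqrt (a * b) / (a + b) ∧
    (d * (1 / Real.sqrt (a * b)) = 2 * Real.sqrt (a * b) / (a + b) ↔ a = d ∧ b = d) := by
  have hd0 : 0 < d := by linarith
  have ha0 : 0 < a := lt_of_lt_of_le hd0 ha
  have hb0 : 0 < b := lt_of_lt_of_le hd0 hb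
  have hp : 0 < a * b := mul_pos ha0 hb0
  have hs : 0 < a + b := by linarith
  have hsq : Real.sqrt (a * b) * Real.sqrt (a * b) = a * b := Real.mul_self_sqrt hp.le
  have hsq0 : 0 < Real.sqrt (a * b) := Real.sqrt_pos.mpr hp
  have h1 : d * (1 / Real.sqrt (a * b)) = d / Real.sqrt (a * b) := by ring
  constructor
  · rw [h1, div_le_div_iff₀ hsq0 hs]
    nlinarith [hsq, mul_nonneg ha0.le (sub_nonneg.mpr hb), mul_nonneg hb0.le (sub_nonneg.mpr ha)]
  · rw [h1, div_eq_div_iff hsq0.ne' hs.ne']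
    constructor
    · intro h
      have h2 : d * (a + b) = 2 * (a * b) := by nlinarith [hsq]
      constructor
      · refine le_antisymm ?_ ha
        nlinarith [mul_nonneg ha0.le (sub_nonneg.mpr hb), mul_nonneg hb0.le (sub_nonneg.mpr ha)]
      · refine le_antisymm ?_ hb
        nlinarith [mul_nonneg ha0.le (sub_nonneg.mpr hb), mul_nonneg hb0.le (sub_nonneg.mpr ha)]
    · rintro ⟨rfl, rfl⟩
      nlinarith [hsq]

variable (G : SimpleGraph V) [DecidableRel G.Adj]

theorem stmt3 (hG : G.Connected) (hδ : 2 ≤ G.minDegree) :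
    (G.minDegree : ℝ) * randicIndex G ≤ geoArithIndex G ∧
    ((G.minDegree : ℝ) * randicIndex G = geoArithIndex G ↔
      G.IsRegularOfDegree G.minDegree) := by
  classical
  have hdle : ∀ u : V, (G.minDegree : ℝ) ≤ (G.degree u : ℝ) := fun u => by
    exact_mod_cast G.minDegree_le_degree u
  have hd2 : (2 : ℝ) ≤ (G.minDegree : ℝ) := by exact_mod_cast hδ
  rw [randicIndex, geoArithIndex, Finset.mul_sum]
  have hle : ∀ e ∈ G.edgeFinset,
      (G.minDegree : ℝ) * Sym2.lift
        ⟨fun u v => 1 / Real.sqrt ((G.degree u : ℝ) * (G.degree v : ℝ)),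
         fun u v => by dsimp only; rw [mul_comm ((G.degree u : ℝ)) ((G.degree v : ℝ))]⟩ e ≤
      Sym2.lift
        ⟨fun u v => 2 * Real.sqrt ((G.degree u : ℝ) * (G.degree v : ℝ)) /
            ((G.degree u : ℝ) + (G.degree v : ℝ)),
         fun u v => by dsimp only; rw [mul_comm ((G.degree u : ℝ)) ((G.degree v : ℝ)),
            add_comm ((G.degree u : ℝ)) ((G.degree v : ℝ))]⟩ e := by
    intro e he
    induction e using Sym2.ind with
    | _ u v =>
      simp only [Sym2.lift_mk]
      exact (key_ineq _ _ _ hd2 (hdle u) (hdle v)).1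
  refine ⟨Finset.sum_le_sum hle, ?_⟩
  rw [Finset.sum_eq_sum_iff_of_le hle]
  constructor
  · intro h v
    have hdpos : 0 < G.degree v := lt_of_lt_of_le (by norm_num)
      (le_trans hδ (G.minDegree_le_degree v))
    obtain ⟨w, hw⟩ := (G.degree_pos_iff_exists_adj v).mp hdpos
    have he : s(v, w) ∈ G.edgeFinset := mem_edgeFinset.mpr ((G.mem_edgeSet).mpr hw)
    have := h _ he
    simp only [Sym2.lift_mk] at this
    have h3 := ((key_ineq _ _ _ hd2 (hdle v) (hdle w)).2.mp this).1
    exact_mod_cast h3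
  · intro hreg e he
    induction e using Sym2.ind with
    | _ u v =>
      simp only [Sym2.lift_mk]
      exact (key_ineq _ _ _ hd2 (hdle u) (hdle v)).2.mpr
        ⟨by exact_mod_cast hreg u, by exact_mod_cast hreg v⟩
end

section
/- Let G be a connected simple graph with n ≥ 2 vertices. Then H(G) ≤ GA(G) ≤ (n−1) · H(G). The lower bound is attained if and only if G is isomorphic to the path P₂ (a single edge), and the upper bound is attained if and only if G is isomorphic to the complete graph Kₙ. -/
open Finset SimpleGraph

variable {V : Type*} [Fintype V] [DecidableEq V]

section Helpers
variable {G : SimpleGraph V} [DecidableRel G.Adj]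
set_option linter.unusedSectionVars false





lemma aux_exists_adj (hG : G.Connected) (hc : 2 ≤ Fintype.card V) (v : V) :
    ∃ w, G.Adj v w := by
  have : ∃ u, u ≠ v := by
    obtain ⟨a, b, hab⟩ := Fintype.exists_pair_of_one_lt_card (α := V) (by omega)
    by_cases h : a = v
    · exact ⟨b, fun hb => hab (hb ▸ h ▸ rfl)⟩
    · exact ⟨a, h⟩
  obtain ⟨u, hu⟩ := this
  obtain ⟨p⟩ := hG.preconnected v u
  cases p with
  | nil => exact absurd rfl hu
  | cons h q => exact ⟨_, h⟩

lemma aux_uniq_nbr {u v x : V} (hd : G.degree u = 1) (hv : G.Adj u v) (hx : G.Adj u x) : x = v :=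
  Finset.card_le_one.mp hd.le x (by simpa using hx) v (by simpa using hv)

lemma aux_walk_mem {u v : V} (hdu : G.degree u = 1) (hdv : G.degree v = 1) (huv : G.Adj u v) :
    ∀ {a b : V} (_ : G.Walk a b), (a = u ∨ a = v) → (b = u ∨ b = v) := by
  intro a b p
  induction p with
  | nil => exact id
  | cons h q ih =>
    intro ha
    apply ih
    rcases ha with rfl | rfl
    · right; exact aux_uniq_nbr hdu huv h
    · left; exact aux_uniq_nbr hdv huv.symm h

lemma aux_deg_of_full (hadj : ∀ a b : V, G.Adj a b ↔ a ≠ b) (u : V) :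
    G.degree u = Fintype.card V - 1 := by
  have : G.neighborFinset u = Finset.univ.erase u := by
    ext w
    simp [SimpleGraph.mem_neighborFinset, hadj, ne_comm, eq_comm]
  rw [SimpleGraph.degree, this, Finset.card_erase_of_mem (Finset.mem_univ u), Finset.card_univ]

lemma aux_full_of_deg (hdeg : ∀ u : V, G.degree u = Fintype.card V - 1) (a b : V) (hab : a ≠ b) :
    G.Adj a b := by
  have hsub : G.neighborFinset a ⊆ Finset.univ.erase a := by
    intro w hw
    simp only [Finset.mem_erase, Finset.mem_univ, and_true]
    rintro rfl
    exact G.irrefl (by simpa using hw : G.Adj w w)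
  have hcard : (Finset.univ.erase a).card ≤ (G.neighborFinset a).card := by
    rw [Finset.card_erase_of_mem (Finset.mem_univ a), Finset.card_univ,
      SimpleGraph.card_neighborFinset_eq_degree, hdeg]
  have := Finset.eq_of_subset_of_card_le hsub hcard
  have : b ∈ G.neighborFinset a := by
    rw [this]; simp [hab.symm]
  simpa using this


noncomputable def fH (G : SimpleGraph V) [DecidableRel G.Adj] : Sym2 V → ℝ :=
  Sym2.lift ⟨fun u v => 2 / ((G.degree u : ℝ) + (G.degree v : ℝ)),
     fun u v => by dsimp only; rw [add_comm ((G.degree u : ℝ)) ((G.degree v : ℝ))]⟩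

noncomputable def fGA (G : SimpleGraph V) [DecidableRel G.Adj] : Sym2 V → ℝ :=
  Sym2.lift ⟨fun u v => 2 * Real.sqrt ((G.degree u : ℝ) * (G.degree v : ℝ)) /
        ((G.degree u : ℝ) + (G.degree v : ℝ)),
     fun u v => by dsimp only; rw [mul_comm ((G.degree u : ℝ)) ((G.degree v : ℝ)),
        add_comm ((G.degree u : ℝ)) ((G.degree v : ℝ))]⟩

lemma fH_mk (u v : V) : fH G s(u, v) = 2 / ((G.degree u : ℝ) + (G.degree v : ℝ)) := rfl

lemma fGA_mk (u v : V) : fGA G s(u, v) = 2 * Real.sqrt ((G.degree u : ℝ) * (G.degree v : ℝ)) /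
    ((G.degree u : ℝ) + (G.degree v : ℝ)) := rfl

lemma deg_one_le {u v : V} (h : G.Adj u v) : (1 : ℝ) ≤ (G.degree u : ℝ) := by
  exact_mod_cast (G.degree_pos_iff_exists_adj u).2 ⟨v, h⟩

lemma deg_le {n : ℕ} (hn : Fintype.card V = n) (u : V) : (G.degree u : ℝ) ≤ (n : ℝ) - 1 := by
  have h := G.degree_lt_card_verts u
  rw [hn] at h
  have : (G.degree u : ℝ) + 1 ≤ (n : ℝ) := by exact_mod_cast h
  linarith

lemma term_le1 {u v : V} (h : G.Adj u v) : fH G s(u, v) ≤ fGA G s(u, v) := by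
  rw [fH_mk, fGA_mk]
  have ha := deg_one_le h
  have hb := deg_one_le h.symm
  have hs : (1 : ℝ) ≤ Real.sqrt ((G.degree u : ℝ) * (G.degree v : ℝ)) := by
    rw [show (1:ℝ) = Real.sqrt 1 from Real.sqrt_one.symm]
    exact Real.sqrt_le_sqrt (by nlinarith)
  have hab : (0:ℝ) < (G.degree u : ℝ) + (G.degree v : ℝ) := by linarith
  calc 2 / ((G.degree u : ℝ) + (G.degree v : ℝ))
      = 2 * 1 / ((G.degree u : ℝ) + (G.degree v : ℝ)) := by ring
    _ ≤ 2 * Real.sqrt ((G.degree u : ℝ) * (G.degree v : ℝ)) /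
        ((G.degree u : ℝ) + (G.degree v : ℝ)) := by gcongr

lemma term_le2 {n : ℕ} (hn : Fintype.card V = n) (hn2 : 2 ≤ n) {u v : V} (h : G.Adj u v) :
    fGA G s(u, v) ≤ ((n : ℝ) - 1) * fH G s(u, v) := by
  rw [fH_mk, fGA_mk]
  have ha := deg_one_le h
  have hb := deg_one_le h.symm
  have hab : (0:ℝ) < (G.degree u : ℝ) + (G.degree v : ℝ) := by linarith
  have hnu := deg_le (G := G) hn u
  have hnv := deg_le (G := G) hn v
  have hn1 : (0:ℝ) ≤ (n : ℝ) - 1 := by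
    have : (2:ℝ) ≤ n := by exact_mod_cast hn2
    linarith
  have hs : Real.sqrt ((G.degree u : ℝ) * (G.degree v : ℝ)) ≤ (n : ℝ) - 1 := by
    calc Real.sqrt ((G.degree u : ℝ) * (G.degree v : ℝ))
        ≤ Real.sqrt (((n:ℝ) - 1) ^ 2) := Real.sqrt_le_sqrt (by nlinarith)
      _ = (n:ℝ) - 1 := Real.sqrt_sq hn1
  rw [← mul_div_assoc]
  have : 2 * Real.sqrt ((G.degree u : ℝ) * (G.degree v : ℝ)) ≤ ((n:ℝ) - 1) * 2 := by linarith
  gcongr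

lemma extract1 {u v : V} (h : G.Adj u v) (he : fH G s(u, v) = fGA G s(u, v)) :
    G.degree u = 1 ∧ G.degree v = 1 := by
  rw [fH_mk, fGA_mk] at he
  have ha := deg_one_le h
  have hb := deg_one_le h.symm
  have hab : ((G.degree u : ℝ) + (G.degree v : ℝ)) ≠ 0 := by positivity
  rw [div_eq_div_iff hab hab] at he
  have hs : Real.sqrt ((G.degree u : ℝ) * (G.degree v : ℝ)) = 1 := by
    have h2 : (2:ℝ) = 2 * Real.sqrt ((G.degree u : ℝ) * (G.degree v : ℝ)) :=
      mul_right_cancel₀ hab he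
    linarith
  have hmul : (G.degree u : ℝ) * (G.degree v : ℝ) = 1 := Real.sqrt_eq_one.mp hs
  have hnat : G.degree u * G.degree v = 1 := by exact_mod_cast hmul
  have h1 : 1 ≤ G.degree u := (G.degree_pos_iff_exists_adj u).2 ⟨v, h⟩
  have h2 : 1 ≤ G.degree v := (G.degree_pos_iff_exists_adj v).2 ⟨u, h.symm⟩
  exact (mul_eq_one_iff_of_one_le h1 h2).mp hnat

lemma extract2 {n : ℕ} (hn : Fintype.card V = n) (hn2 : 2 ≤ n) {u v : V} (h : G.Adj u v)
    (he : fGA G s(u, v) = ((n : ℝ) - 1) * fH G s(u, v)) :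
    G.degree u = n - 1 ∧ G.degree v = n - 1 := by
  rw [fH_mk, fGA_mk] at he
  have ha := deg_one_le h
  have hb := deg_one_le h.symm
  have hab : ((G.degree u : ℝ) + (G.degree v : ℝ)) ≠ 0 := by positivity
  rw [← mul_div_assoc, div_eq_div_iff hab hab] at he
  have hs : Real.sqrt ((G.degree u : ℝ) * (G.degree v : ℝ)) = (n:ℝ) - 1 := by
    have h2 : 2 * Real.sqrt ((G.degree u : ℝ) * (G.degree v : ℝ)) = ((n:ℝ) - 1) * 2 :=
      mul_right_cancel₀ hab he
    linarith
  have hmulR : (G.degree u : ℝ) * (G.degree v : ℝ) = ((n:ℝ) - 1) ^ 2 := by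
    rw [← Real.sq_sqrt (by positivity : (0:ℝ) ≤ (G.degree u : ℝ) * (G.degree v : ℝ)), hs]
  have hc : ((n - 1 : ℕ) : ℝ) = (n:ℝ) - 1 := by
    rw [Nat.cast_sub (by omega)]; norm_num
  have hmul : G.degree u * G.degree v = (n - 1) * (n - 1) := by
    have : (G.degree u : ℝ) * (G.degree v : ℝ) = ((n-1:ℕ):ℝ) * ((n-1:ℕ):ℝ) := by
      rw [hc, hmulR]; ring
    exact_mod_cast this
  have hdu : G.degree u ≤ n - 1 := by have := G.degree_lt_card_verts u; omega
  have hdv : G.degree v ≤ n - 1 := by have := G.degree_lt_card_verts v; omega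
  have hpos : 0 < n - 1 := by omega
  have h1 : n - 1 ≤ G.degree v := by
    apply Nat.le_of_mul_le_mul_left _ hpos
    calc (n-1) * (n-1) = G.degree u * G.degree v := hmul.symm
      _ ≤ (n-1) * G.degree v := Nat.mul_le_mul hdu le_rfl
  have h2 : n - 1 ≤ G.degree u := by
    apply Nat.le_of_mul_le_mul_left _ hpos
    calc (n-1) * (n-1) = G.degree v * G.degree u := by rw [← hmul]; ring
      _ ≤ (n-1) * G.degree u := Nat.mul_le_mul hdv le_rfl
  exact ⟨le_antisymm hdu h2, le_antisymm hdv h1⟩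

lemma term_eq1 {u v : V} (hdu : G.degree u = 1) (hdv : G.degree v = 1) :
    fH G s(u, v) = fGA G s(u, v) := by
  rw [fH_mk, fGA_mk, hdu, hdv]
  norm_num

lemma term_eq2 {n : ℕ} (hn2 : 2 ≤ n) {u v : V} (hdu : G.degree u = n - 1)
    (hdv : G.degree v = n - 1) : fGA G s(u, v) = ((n : ℝ) - 1) * fH G s(u, v) := by
  rw [fH_mk, fGA_mk, hdu, hdv]
  have hc : ((n - 1 : ℕ) : ℝ) = (n:ℝ) - 1 := by
    rw [Nat.cast_sub (by omega)]; norm_num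
  rw [hc]
  have hpos : (0:ℝ) < (n:ℝ) - 1 := by
    have : (2:ℝ) ≤ n := by exact_mod_cast hn2
    linarith
  rw [Real.sqrt_mul_self hpos.le]
  field_simp

lemma pg2_adj {i j : Fin 2} : (pathGraph 2).Adj i j ↔ i ≠ j := by
  rw [SimpleGraph.pathGraph_adj, Ne, Fin.ext_iff]
  have hi := i.isLt
  have hj := j.isLt
  omega

end Helpers

variable (G : SimpleGraph V) [DecidableRel G.Adj]

theorem stmt5 (hG : G.Connected) (n : ℕ) (hn : Fintype.card V = n) (hn2 : 2 ≤ n) :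
    harmonicIndex G ≤ geoArithIndex G ∧
    geoArithIndex G ≤ ((n : ℝ) - 1) * harmonicIndex G ∧
    (harmonicIndex G = geoArithIndex G ↔ Nonempty (G ≃g pathGraph 2)) ∧
    (geoArithIndex G = ((n : ℝ) - 1) * harmonicIndex G ↔
      Nonempty (G ≃g completeGraph (Fin n))) := by
  have hcard2 : 2 ≤ Fintype.card V := by omega
  have hmem : ∀ {u v : V}, G.Adj u v → s(u, v) ∈ G.edgeFinset := by
    intro u v h
    rw [mem_edgeFinset, mem_edgeSet]
    exact h
  have hH : harmonicIndex G = ∑ e ∈ G.edgeFinset, fH G e := rfl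
  have hGA : geoArithIndex G = ∑ e ∈ G.edgeFinset, fGA G e := rfl
  have hle1 : ∀ e ∈ G.edgeFinset, fH G e ≤ fGA G e := by
    intro e
    induction e using Sym2.ind with
    | _ u v => exact fun he => term_le1 (by simpa using he)
  have hle2 : ∀ e ∈ G.edgeFinset, fGA G e ≤ ((n : ℝ) - 1) * fH G e := by
    intro e
    induction e using Sym2.ind with
    | _ u v => exact fun he => term_le2 hn hn2 (by simpa using he)
  refine ⟨?_, ?_, ?_, ?_⟩
  · rw [hH, hGA]; exact Finset.sum_le_sum hle1
  · rw [hH, hGA, Finset.mul_sum]; exact Finset.sum_le_sum hle2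
  · constructor
    · intro heq
      rw [hH, hGA] at heq
      have hterm := (Finset.sum_eq_sum_iff_of_le hle1).mp heq
      have hne' : Nonempty V := by
        rw [← Fintype.card_pos_iff]; omega
      obtain ⟨v0⟩ := hne'
      obtain ⟨w0, hvw⟩ := aux_exists_adj hG hcard2 v0
      obtain ⟨hd1, hd2⟩ := extract1 hvw (hterm _ (hmem hvw))
      have hall : ∀ x : V, x = v0 ∨ x = w0 := fun x =>
        aux_walk_mem hd1 hd2 hvw (hG.preconnected v0 x).some (Or.inl rfl)
      have hne : v0 ≠ w0 := hvw.ne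
      have hadj : ∀ a b : V, G.Adj a b ↔ a ≠ b := by
        intro a b
        constructor
        · exact Adj.ne
        · intro hab
          rcases hall a with rfl | rfl <;> rcases hall b with rfl | rfl
          · exact absurd rfl hab
          · exact hvw
          · exact hvw.symm
          · exact absurd rfl hab
      let f : V ≃ Fin 2 :=
        { toFun := fun x => if x = v0 then 0 else 1
          invFun := fun i => if i = 0 then v0 else w0
          left_inv := by
            intro x
            have h' : w0 ≠ v0 := Ne.symm hne
            rcases hall x with h | h <;> subst h
            · simp
            · simp [h']
          right_inv := by
            intro i
            have h' : w0 ≠ v0 := Ne.symm hne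
            fin_cases i <;> simp [h'] }
      refine ⟨⟨f, ?_⟩⟩
      intro a b
      rw [pg2_adj, hadj]
      exact (Equiv.injective f).ne_iff
    · rintro ⟨φ⟩
      have hc2 : Fintype.card V = 2 := by
        rw [Fintype.card_congr φ.toEquiv, Fintype.card_fin]
      have hadj : ∀ a b : V, G.Adj a b ↔ a ≠ b := by
        intro a b
        constructor
        · exact Adj.ne
        · intro hab
          apply φ.map_rel_iff.mp
          exact pg2_adj.mpr (fun h => hab (φ.injective h))
      have hdeg : ∀ u : V, G.degree u = 1 := by
        intro u; rw [aux_deg_of_full hadj, hc2]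
      rw [hH, hGA]
      apply Finset.sum_congr rfl
      intro e
      induction e using Sym2.ind with
      | _ u v => exact fun he => term_eq1 (hdeg u) (hdeg v)
  · constructor
    · intro heq
      rw [hH, hGA, Finset.mul_sum] at heq
      have hterm := (Finset.sum_eq_sum_iff_of_le hle2).mp heq
      have hdeg : ∀ u : V, G.degree u = n - 1 := by
        intro u
        obtain ⟨w, hw⟩ := aux_exists_adj hG hcard2 u
        exact (extract2 hn hn2 hw (hterm _ (hmem hw))).1
      have hadj : ∀ a b : V, G.Adj a b ↔ a ≠ b := by
        intro a b
        refine ⟨Adj.ne, fun hab => aux_full_of_deg ?_ a b hab⟩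
        intro u; rw [hdeg u, hn]
      refine ⟨⟨Fintype.equivFinOfCardEq hn, ?_⟩⟩
      intro a b
      simp only [completeGraph_eq_top, top_adj]
      rw [hadj]
      exact (Equiv.injective _).ne_iff
    · rintro ⟨φ⟩
      have hadj : ∀ a b : V, G.Adj a b ↔ a ≠ b := by
        intro a b
        refine ⟨Adj.ne, fun hab => φ.map_rel_iff.mp ?_⟩
        simp only [completeGraph_eq_top, top_adj]
        exact fun h => hab (φ.injective h)
      have hdeg : ∀ u : V, G.degree u = n - 1 := by
        intro u; rw [aux_deg_of_full hadj, hn]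
      rw [hH, hGA, Finset.mul_sum]
      apply Finset.sum_congr rfl
      intro e
      induction e using Sym2.ind with
      | _ u v => exact fun he => term_eq2 hn2 (hdeg u) (hdeg v)
end
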